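/- arXiv:math/9902075 — 4 statements merged into one kernel-verified Lean document; each statement's English description precedes it below -/
import Mathlib

section
/- Let M be a monomial G-module with basis (v_i)_{i∈I}, let α be a one-dimensional character of G, let I* be a set of representatives of the G-orbits in I, and let J(M,α) = I* ∩ I(M,α). Then the family (a_α(v_j))_{j∈J(M,α)} is linearly independent in M, where a_α = |G|^{-1} Σ_{g∈G} α(g)·g. -/
/-- Let `M = I →₀ K` be a monomial `G`-module with basis
`(v_i)` and action `g • v_i = γ_i(g) • v_{g•i}`, let `R` be a transversal of
the `G`-orbits in `I`, and let `J = {j ∈ R : γ_j = α⁻¹ on G_j}`.  Then the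
family `(a_α(v_j))_{j∈J}` is linearly independent. -/
theorem averaged_vectors_linearly_independent
    {K : Type*} [Field K] [CharZero K]
    {G : Type*} [Group G] [Fintype G]
    {I : Type*} [MulAction G I]
    (γ : I → G → Kˣ)
    (hγ : ∀ (i : I) (g h : G), γ i (g * h) = γ (h • i) g * γ i h)
    (α : G →* Kˣ)
    (R : Set I)
    (hR : ∀ i : I, ∃! r : I, r ∈ R ∧ r ∈ MulAction.orbit G i) :
    LinearIndependent K
      (fun j : {j : I // j ∈ R ∧ ∀ h ∈ MulAction.stabilizer G j, γ j h = (α h)⁻¹} =>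
        (Fintype.card G : K)⁻¹ •
          ∑ g : G, ((α g : K) * (γ (j : I) g : K)) •
            Finsupp.single (g • (j : I)) (1 : K)) := by
  classical
  rw [linearIndependent_iff']
  intro s f hsum j hj
  have h := congrArg (fun v : I →₀ K => v (j : I)) hsum
  simp only [Finsupp.coe_finset_sum, Finset.sum_apply, Finsupp.smul_apply,
    Finsupp.coe_zero, Pi.zero_apply, smul_eq_mul, Finsupp.single_apply] at h
  rw [Finset.sum_eq_single j] at h
  · -- h : f j * ((card G)⁻¹ * Σ_g (α g * γ j g) * (if g • j = j then 1 else 0)) = 0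
    have hstab : ∀ g : G, ((α g : K) * (γ (j : I) g : K)) *
        (if g • (j : I) = (j : I) then (1 : K) else 0)
        = if g • (j : I) = (j : I) then (1 : K) else 0 := by
      intro g
      by_cases hg : g • (j : I) = (j : I)
      · have := j.2.2 g hg
        simp [hg, this]
      · simp [hg]
    have hN : (∑ g : G, ((α g : K) * (γ (j : I) g : K)) *
        (if g • (j : I) = (j : I) then (1 : K) else 0))
        = ((Finset.univ.filter (fun g : G => g • (j : I) = (j : I))).card : K) := by
      rw [Finset.sum_congr rfl (fun g _ => hstab g)]
      simp [Finset.sum_ite_eq]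
    have hNne : ((Finset.univ.filter (fun g : G => g • (j : I) = (j : I))).card : K) ≠ 0 := by
      have : (1 : G) ∈ Finset.univ.filter (fun g : G => g • (j : I) = (j : I)) := by
        simp
      have hpos : 0 < (Finset.univ.filter (fun g : G => g • (j : I) = (j : I))).card :=
        Finset.card_pos.mpr ⟨1, this⟩
      exact_mod_cast Nat.cast_pos.mpr hpos |>.ne'
    have hGne : ((Fintype.card G : K))⁻¹ ≠ 0 := by
      have : (Fintype.card G : K) ≠ 0 := Nat.cast_ne_zero.mpr Fintype.card_ne_zero
      exact inv_ne_zero this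
    rw [hN] at h
    rcases mul_eq_zero.mp h with h1 | h2
    · exact h1
    · exact absurd h2 (mul_ne_zero hGne hNne)
  · intro j' hj's hj'ne
    have hzero : ∀ g : G, g • (j' : I) ≠ (j : I) := by
      intro g hg
      obtain ⟨r, _, hr⟩ := hR (j' : I)
      have h1 : (j : I) = r := hr (j : I) ⟨j.2.1, ⟨g, hg⟩⟩
      have h2 : (j' : I) = r := hr (j' : I) ⟨j'.2.1, MulAction.mem_orbit_self _⟩
      exact hj'ne (Subtype.ext (h2.trans h1.symm))
    have : (∑ g : G, ((α g : K) * (γ (j' : I) g : K)) *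
        (if g • (j' : I) = (j : I) then (1 : K) else 0)) = 0 := by
      apply Finset.sum_eq_zero
      intro g _
      simp [hzero g]
    rw [this]
    ring
  · intro hjs; exact absurd hj hjs
end

section
/- Let a finite group G act on a set I, let α be a one-dimensional character of G with kernel H, and let O be a G-orbit in I. Then the restriction of α to the stabilizer G_i is trivial for some (hence every) i ∈ O if and only if the number of H-orbits contained in O equals the index |G : H|. -/
section Aux

open Pointwise

variable {G : Type*} [Group G] {I : Type*} [MulAction G I]

/-- For a normal subgroup `H`, `orbit H (g • i) = g • orbit H i`. -/
lemma orbit_normal_smul (H : Subgroup G) [H.Normal] (g : G) (i : I) :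
    MulAction.orbit H (g • i) = g • MulAction.orbit H i := by
  ext x
  constructor
  · rintro ⟨⟨h, hh⟩, rfl⟩
    refine ⟨(g⁻¹ * h * g) • i, ⟨⟨g⁻¹ * h * g, ?_⟩, rfl⟩, ?_⟩
    · simpa using Subgroup.Normal.conj_mem ‹H.Normal› h hh g⁻¹
    · show g • (g⁻¹ * h * g) • i = h • g • i
      rw [smul_smul, smul_smul]
      group
  · rintro ⟨y, ⟨⟨h, hh⟩, rfl⟩, rfl⟩
    refine ⟨⟨g * h * g⁻¹, Subgroup.Normal.conj_mem ‹H.Normal› h hh g⟩, ?_⟩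
    show (g * h * g⁻¹) • g • i = g • h • i
    rw [smul_smul, smul_smul]
    group

/-- The number of `H`-orbits (for `H` normal) inside the `G`-orbit of `i`
equals the index of `H ⊔ stabilizer G i`. -/
lemma card_suborbits (H : Subgroup G) [H.Normal] (i : I) :
    Nat.card {s : Set I // ∃ j ∈ MulAction.orbit G i, s = MulAction.orbit H j} =
      (H ⊔ MulAction.stabilizer G i).index := by
  set S : Subgroup G := H ⊔ MulAction.stabilizer G i with hSdef
  set T := {s : Set I // ∃ j ∈ MulAction.orbit G i, s = MulAction.orbit H j} with hT
  let f : G → T := fun g =>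
    ⟨MulAction.orbit H (g • i), ⟨g • i, MulAction.mem_orbit i g, rfl⟩⟩
  have hf : ∀ g g' : G, f g = f g' ↔ g⁻¹ * g' ∈ S := by
    intro g g'
    constructor
    · intro h
      have h' : MulAction.orbit H (g • i) = MulAction.orbit H (g' • i) :=
        congrArg Subtype.val h
      have hmem : g' • i ∈ MulAction.orbit H (g • i) := h' ▸ MulAction.mem_orbit_self _
      rw [orbit_normal_smul] at hmem
      obtain ⟨y, ⟨⟨h₀, hh₀⟩, rfl⟩, hy⟩ := hmem
      have hs : (h₀⁻¹ * (g⁻¹ * g')) ∈ MulAction.stabilizer G i := by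
        rw [MulAction.mem_stabilizer_iff]
        have h2 : (g * h₀) • i = g' • i := by
          rw [mul_smul]; exact hy
        calc (h₀⁻¹ * (g⁻¹ * g')) • i = h₀⁻¹ • g⁻¹ • g' • i := by
              rw [mul_smul, mul_smul]
          _ = h₀⁻¹ • g⁻¹ • (g * h₀) • i := by rw [h2]
          _ = i := by
              simp only [smul_smul]
              have he : h₀⁻¹ * (g⁻¹ * (g * h₀)) = 1 := by group
              rw [he, one_smul]
      have hdec : g⁻¹ * g' = h₀ * (h₀⁻¹ * (g⁻¹ * g')) := by group
      rw [hdec]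
      exact Subgroup.mul_mem _ (Subgroup.mem_sup_left hh₀) (Subgroup.mem_sup_right hs)
    · intro h
      have hmem : g⁻¹ * g' ∈ (H : Set G) * (MulAction.stabilizer G i : Set G) := by
        rw [← Subgroup.normal_mul]; exact h
      obtain ⟨h₀, hh₀, s₀, hs₀, hmul⟩ := hmem
      have hmul' : h₀ * s₀ = g⁻¹ * g' := hmul
      have hs₀' : s₀ ∈ MulAction.stabilizer G i := hs₀
      rw [MulAction.mem_stabilizer_iff] at hs₀'
      have hgi : g' • i = (g * h₀) • i := by
        have hg' : g' = g * (h₀ * s₀) := by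
          rw [hmul']; group
        rw [hg', mul_smul, mul_smul, mul_smul, hs₀']
      apply Subtype.ext
      show MulAction.orbit H (g • i) = MulAction.orbit H (g' • i)
      rw [hgi, mul_smul, orbit_normal_smul H g (h₀ • i), orbit_normal_smul H g i]
      congr 1
      exact (MulAction.orbit_smul (⟨h₀, hh₀⟩ : H) i).symm
  have hwd : ∀ g g' : G, (QuotientGroup.leftRel S) g g' → f g = f g' := by
    intro g g' hr
    rw [QuotientGroup.leftRel_apply] at hr
    exact (hf g g').mpr hr
  let F : G ⧸ S → T := Quotient.lift f hwd
  have hbij : Function.Bijective F := by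
    constructor
    · intro x y
      induction x using Quotient.inductionOn with | h g =>
      induction y using Quotient.inductionOn with | h g' =>
      intro h
      exact Quotient.sound (QuotientGroup.leftRel_apply.mpr ((hf g g').mp h))
    · rintro ⟨s, j, ⟨g, rfl⟩, rfl⟩
      exact ⟨QuotientGroup.mk g, Subtype.ext rfl⟩
  rw [Subgroup.index, ← Nat.card_congr (Equiv.ofBijective F hbij)]

end Aux

/-- Let a finite group `G` act on `I`, let `α : G → Kˣ` be
a one-dimensional character with kernel `H = ker α`, and let `O` be the
`G`-orbit of a point `i`.  Then `α` is trivial on the stabilizer `G_i`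
iff the number of `H`-orbits contained in `O` equals the index `|G : H|`. -/
theorem alpha_orbit_iff_max_suborbits
    {K : Type*} [Field K] [CharZero K]
    {G : Type*} [Group G] [Fintype G]
    {I : Type*} [MulAction G I]
    (α : G →* Kˣ) (i : I) :
    (∀ h ∈ MulAction.stabilizer G i, α h = 1) ↔
      Nat.card {s : Set I // ∃ j ∈ MulAction.orbit G i, s = MulAction.orbit α.ker j} =
        α.ker.index := by
  rw [card_suborbits α.ker i]
  constructor
  · intro hstab
    have hle : MulAction.stabilizer G i ≤ α.ker := fun x hx => hstab x hx
    rw [sup_eq_left.mpr hle]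
  · intro heq h hh
    have hHS : α.ker ≤ α.ker ⊔ MulAction.stabilizer G i := le_sup_left
    have h1 : α.ker.relIndex (α.ker ⊔ MulAction.stabilizer G i) *
        (α.ker ⊔ MulAction.stabilizer G i).index = α.ker.index :=
      Subgroup.relIndex_mul_index hHS
    rw [← heq] at h1
    have hne : (α.ker ⊔ MulAction.stabilizer G i).index ≠ 0 :=
      Subgroup.index_ne_zero_of_finite
    have hone : α.ker.relIndex (α.ker ⊔ MulAction.stabilizer G i) = 1 :=
      Nat.eq_of_mul_eq_mul_right (Nat.pos_of_ne_zero hne)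
        (h1.trans (one_mul _).symm)
    have hSH : α.ker ⊔ MulAction.stabilizer G i ≤ α.ker :=
      Subgroup.relIndex_eq_one.mp hone
    exact hSH (Subgroup.mem_sup_right hh)
end

section
/- Let W ≤ S_d be a permutation group acting diagonally on sequences in [0,n]^d (i.e. σ·(i_1,…,i_d) = (i_{σ^{-1}(1)},…,i_{σ^{-1}(d)})), and let χ = 1 be the trivial character. Then the generating function Σ_j x_{j_1}···x_{j_d}, summed over a transversal J of the W-orbits in [0,n]^d, equals the cycle index Z(W; p_1,…,p_d) = |W|^{-1} Σ_{σ∈W} p_1^{c_1(σ)}···p_d^{c_d(σ)}, where p_s = x_0^s + ··· + x_n^s and c_s(σ) is the number of s-cycles of σ. (Pólya's enumeration theorem.) -/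
/-! Weighting each colouring `f : Fin d → Fin (n + 1)` by its monomial `∏ s, X (f s)`, which is
constant on `W`-orbits, Burnside's counting argument gives `|W| • ∑_{j ∈ J} X^j` as the sum over
`σ ∈ W` of the weights of the colourings fixed by `σ`. A colouring is fixed by `σ` exactly when
it is constant on the cycles of `σ`, so those weights factor over the cycles: a cycle of length
`s` contributes the power sum `p_s`, giving `p_1^{c_1(σ)} ⋯ p_d^{c_d(σ)}`. -/

open MvPolynomial

/-- The number `c_s(σ)` of cycles of length `s` in the cyclic decomposition of
a permutation `σ` of a finite set (fixed points count as cycles of length 1). -/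
def cycleCount {β : Type*} [Fintype β] [DecidableEq β]
    (σ : Equiv.Perm β) (s : ℕ) : ℕ :=
  if s = 1 then Fintype.card β - σ.support.card else Multiset.count s σ.cycleType

open Finset

namespace Equiv.Perm

section Invariant

variable {α β : Type*} (σ : Perm α)

lemma apply_zpow_eq_of_comp_eq_self {f : α → β} (hf : f ∘ σ = f) (x : α) (i : ℤ) :
    f ((σ ^ i) x) = f x := by
  have hinv : ∀ y, f (σ⁻¹ y) = f y := fun y => by simpa using (congrFun hf (σ⁻¹ y)).symm
  induction i using Int.induction_on with
  | zero => rfl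
  | succ i ih => rw [add_comm, zpow_add, zpow_one, mul_apply, ← ih]; exact congrFun hf _
  | pred i ih => rw [sub_eq_neg_add, zpow_add, zpow_neg_one, mul_apply, hinv, ih]

lemma apply_eq_of_comp_eq_self {f : α → β} (hf : f ∘ σ = f) {x y : α} (h : σ.SameCycle x y) :
    f x = f y := by
  obtain ⟨i, rfl⟩ := h
  exact (apply_zpow_eq_of_comp_eq_self σ hf x i).symm

def compEqSelfEquiv : {f : α → β // f ∘ σ = f} ≃ (Quotient (SameCycle.setoid σ) → β) where
  toFun f := Quotient.lift f.1 fun _ _ => apply_eq_of_comp_eq_self σ f.2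
  invFun g := ⟨g ∘ Quotient.mk _,
    funext fun x => congrArg g (Quotient.sound (sameCycle_apply_left.mpr (SameCycle.refl σ x)))⟩
  left_inv _ := rfl
  right_inv _ := funext fun ω => Quotient.inductionOn ω fun _ => rfl

end Invariant

variable {α : Type*} [Fintype α] [DecidableEq α] (σ : Perm α)

instance : DecidableRel (SameCycle.setoid σ).r := inferInstanceAs (DecidableRel σ.SameCycle)

/-- The classes of `SameCycle` are the cycles of `σ` together with its fixed points, which count
as cycles of length `1`. -/
def cycleSize (ω : Quotient (SameCycle.setoid σ)) : ℕ :=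
  #{x | Quotient.mk _ x = ω}

lemma cycleSize_mk (x : α) :
    cycleSize σ (Quotient.mk _ x) = #{y | σ.SameCycle x y} := by
  simp only [cycleSize, Quotient.eq]
  exact congrArg card (filter_congr fun y _ => ⟨SameCycle.symm, SameCycle.symm⟩)

lemma cycleSize_mk_of_mem_support {x : α} (hx : x ∈ σ.support) :
    cycleSize σ (Quotient.mk _ x) = #(σ.cycleOf x).support := by
  rw [cycleSize_mk]
  congr 1
  ext y
  simp only [mem_filter, mem_univ, true_and, mem_support_cycleOf_iff, hx, and_true]

lemma cycleSize_mk_of_notMem_support {x : α} (hx : x ∉ σ.support) :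
    cycleSize σ (Quotient.mk _ x) = 1 := by
  rw [cycleSize_mk, card_eq_one]
  refine ⟨x, eq_singleton_iff_unique_mem.mpr ⟨mem_filter.mpr ⟨mem_univ x, SameCycle.refl σ x⟩, ?_⟩⟩
  exact fun y hy => ((mem_filter.mp hy).2.eq_of_left (notMem_support.mp hx)).symm

lemma cycleSize_mk_eq_one_iff (x : α) :
    cycleSize σ (Quotient.mk _ x) = 1 ↔ x ∉ σ.support := by
  refine ⟨fun h hx => ?_, cycleSize_mk_of_notMem_support σ⟩
  have := (isCycle_cycleOf σ (mem_support.mp hx)).two_le_card_support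
  rw [cycleSize_mk_of_mem_support σ hx] at h
  omega

lemma cycleSize_mem_Icc (ω : Quotient (SameCycle.setoid σ)) :
    cycleSize σ ω ∈ Icc 1 (Fintype.card α) := by
  induction ω using Quotient.inductionOn with
  | h x =>
    rw [mem_Icc, cycleSize_mk, Nat.one_le_iff_ne_zero, Ne, card_eq_zero]
    exact ⟨ne_empty_of_mem (mem_filter.mpr ⟨mem_univ x, SameCycle.refl σ x⟩), card_le_univ _⟩

lemma card_cycleSize_eq_one : #{ω | cycleSize σ ω = 1} = Fintype.card α - #σ.support := by
  rw [← card_compl]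
  symm
  refine card_bij (fun x _ => Quotient.mk _ x) (fun x hx => ?_) (fun x hx y _ hxy => ?_) ?_
  · exact mem_filter.mpr ⟨mem_univ _, cycleSize_mk_of_notMem_support σ (mem_compl.mp hx)⟩
  · exact (Quotient.exact hxy).eq_of_left (notMem_support.mp (mem_compl.mp hx))
  · intro ω hω
    induction ω using Quotient.inductionOn with
    | h x => exact ⟨x, mem_compl.mpr ((cycleSize_mk_eq_one_iff σ x).mp (mem_filter.mp hω).2), rfl⟩

lemma count_cycleType_eq_card_filter (s : ℕ) :
    σ.cycleType.count s = #{c ∈ σ.cycleFactorsFinset | #c.support = s} := by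
  rw [cycleType_def, Multiset.count_map, Finset.card, filter_val]
  simp only [Function.comp_apply, eq_comm]

def cycleOfClass : Quotient (SameCycle.setoid σ) → Perm α :=
  Quotient.lift σ.cycleOf fun _ _ h => h.cycleOf_eq

lemma card_cycleSize_eq_of_ne_one {s : ℕ} (hs : s ≠ 1) :
    #{ω | cycleSize σ ω = s} = σ.cycleType.count s := by
  rw [count_cycleType_eq_card_filter]
  have mem_support_of_size : ∀ x : α, cycleSize σ (Quotient.mk _ x) = s → x ∈ σ.support :=
    fun x hx => not_not.mp fun h => hs (hx ▸ cycleSize_mk_of_notMem_support σ h)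
  refine card_bij (fun ω _ => cycleOfClass σ ω) (fun ω hω => ?_) (fun ω hω ω' hω' h => ?_) ?_
  · induction ω using Quotient.inductionOn with
    | h x =>
      have hx := mem_support_of_size x (mem_filter.mp hω).2
      refine mem_filter.mpr ⟨cycleOf_mem_cycleFactorsFinset_iff.mpr hx, ?_⟩
      rw [← (mem_filter.mp hω).2, cycleSize_mk_of_mem_support σ hx]
      rfl
  · induction ω, ω' using Quotient.inductionOn₂ with
    | h x y =>
      have hy := mem_support_of_size y (mem_filter.mp hω').2
      have hyx : y ∈ (σ.cycleOf x).support := by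
        rw [show σ.cycleOf x = σ.cycleOf y from h]
        exact mem_support_cycleOf_iff.mpr ⟨SameCycle.refl σ y, hy⟩
      exact Quotient.sound (mem_support_cycleOf_iff.mp hyx).1
  · intro c hc
    obtain ⟨hcσ, rfl⟩ := mem_filter.mp hc
    obtain ⟨x, hx⟩ := (mem_cycleFactorsFinset_iff.mp hcσ).1.nonempty_support
    have hcx : c = σ.cycleOf x := cycle_is_cycleOf hx hcσ
    have hxσ : x ∈ σ.support := cycleOf_mem_cycleFactorsFinset_iff.mp (hcx ▸ hcσ)
    refine ⟨Quotient.mk _ x, mem_filter.mpr ⟨mem_univ _, ?_⟩, hcx.symm⟩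
    rw [cycleSize_mk_of_mem_support σ hxσ, hcx]

lemma card_cycleSize_eq (s : ℕ) : #{ω | cycleSize σ ω = s} = cycleCount σ s := by
  unfold cycleCount
  split_ifs with hs
  · exact hs ▸ card_cycleSize_eq_one σ
  · exact card_cycleSize_eq_of_ne_one σ hs

lemma prod_cycleSize {M : Type*} [CommMonoid M] (p : ℕ → M) :
    ∏ ω, p (cycleSize σ ω) = ∏ s ∈ Icc 1 (Fintype.card α), p s ^ cycleCount σ s := by
  rw [← prod_fiberwise_of_maps_to (fun ω _ => cycleSize_mem_Icc σ ω)]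
  refine prod_congr rfl fun s _ => ?_
  rw [← card_cycleSize_eq, ← prod_const]
  exact prod_congr rfl fun ω hω => by rw [(mem_filter.mp hω).2]

lemma prod_apply_mk {M : Type*} [CommMonoid M] (F : Quotient (SameCycle.setoid σ) → M) :
    ∏ x, F (Quotient.mk _ x) = ∏ ω, F ω ^ cycleSize σ ω := by
  rw [Finset.prod_comp F (Quotient.mk _), image_univ_of_surjective Quotient.mk_surjective]
  rfl

theorem sum_prod_comp_eq_self {β : Type*} [Fintype β] [DecidableEq β] {R : Type*}
    [CommSemiring R] (w : β → R) :
    ∑ f : α → β with f ∘ σ = f, ∏ x, w (f x) =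
      ∏ s ∈ Icc 1 (Fintype.card α), (∑ i, w i ^ s) ^ cycleCount σ s := by
  rw [sum_subtype _ (fun f => mem_filter.trans (and_iff_right (mem_univ f))),
    ← (compEqSelfEquiv σ).symm.sum_comp]
  calc ∑ g : Quotient (SameCycle.setoid σ) → β, ∏ x, w (g (Quotient.mk _ x))
      = ∑ g : Quotient (SameCycle.setoid σ) → β, ∏ ω, w (g ω) ^ cycleSize σ ω :=
        sum_congr rfl fun g _ => prod_apply_mk σ fun ω => w (g ω)
    _ = ∏ ω, ∑ i, w i ^ cycleSize σ ω := (Fintype.prod_sum fun ω i => w i ^ cycleSize σ ω).symm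
    _ = ∏ s ∈ Icc 1 (Fintype.card α), (∑ i, w i ^ s) ^ cycleCount σ s :=
        prod_cycleSize σ fun s => ∑ i, w i ^ s

end Equiv.Perm

namespace MulAction

variable {G X : Type*} [Group G] [Fintype G] [MulAction G X] [DecidableEq X]

lemma card_smul_transversal_eq_card_stabilizer (J : Finset X)
    (hJ : ∀ x : X, ∃! j, j ∈ J ∧ ∃ g : G, x = g • j) (x : X) :
    #{p ∈ J ×ˢ (univ : Finset G) | p.2 • p.1 = x} = #{g : G | g • x = x} := by
  obtain ⟨j, ⟨hj, g₀, rfl⟩, hunique⟩ := hJ x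
  have fst_eq : ∀ p ∈ ({p ∈ J ×ˢ (univ : Finset G) | p.2 • p.1 = g₀ • j} : Finset (X × G)),
      p.1 = j := fun p hp => by
    simp only [mem_filter, mem_product, mem_univ, and_true] at hp
    exact hunique p.1 ⟨hp.1, p.2, hp.2.symm⟩
  symm
  refine card_nbij' (fun g => (j, g * g₀)) (fun p => p.2 * g₀⁻¹) (fun g hg => ?_) (fun p hp => ?_)
    (fun g _ => by simp) (fun p hp => ?_)
  · simp only [coe_filter, mem_univ, true_and, Set.mem_ofPred_eq, mem_product, and_true] at hg ⊢
    exact ⟨hj, by rw [mul_smul, hg]⟩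
  · have hp1 := fst_eq p hp
    simp only [coe_filter, mem_univ, true_and, Set.mem_ofPred_eq, mem_product, and_true] at hp ⊢
    rw [mul_smul, inv_smul_smul, ← hp.2, hp1]
  · simp [← fst_eq p hp]

theorem card_nsmul_sum_transversal [Fintype X] {M : Type*} [AddCommMonoid M] (J : Finset X)
    (hJ : ∀ x : X, ∃! j, j ∈ J ∧ ∃ g : G, x = g • j) (w : X → M)
    (hw : ∀ (g : G) (x : X), w (g • x) = w x) :
    Fintype.card G • ∑ j ∈ J, w j = ∑ g : G, ∑ x with g • x = x, w x := by
  calc Fintype.card G • ∑ j ∈ J, w j = ∑ p ∈ J ×ˢ (univ : Finset G), w (p.2 • p.1) := by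
        rw [sum_product, smul_sum]
        exact sum_congr rfl fun j _ => by simp [hw]
    _ = ∑ x, ∑ p ∈ J ×ˢ (univ : Finset G) with p.2 • p.1 = x, w (p.2 • p.1) :=
        (sum_fiberwise _ _ _).symm
    _ = ∑ x, ∑ g : G with g • x = x, w x := by
        refine sum_congr rfl fun x _ => ?_
        rw [sum_congr rfl fun p hp => congrArg w (mem_filter.mp hp).2, sum_const, sum_const,
          card_smul_transversal_eq_card_stabilizer J hJ]
    _ = ∑ g : G, ∑ x with g • x = x, w x := sum_comm' (by simp)

end MulAction

theorem Subgroup.card_nsmul_sum_transversal_comp {α β M : Type*} [Fintype α] [DecidableEq α]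
    [Fintype β] [DecidableEq β] [AddCommMonoid M] (W : Subgroup (Equiv.Perm α)) [Fintype W]
    (J : Finset (α → β)) (hJ : ∀ f : α → β, ∃! j, j ∈ J ∧ ∃ σ ∈ W, f = j ∘ σ)
    (w : (α → β) → M) (hw : ∀ σ ∈ W, ∀ f, w (f ∘ σ) = w f) :
    Nat.card W • ∑ j ∈ J, w j = ∑ σ : W, ∑ f : α → β with f ∘ σ = f, w f := by
  let : Fintype Wᵈᵐᵃ := Fintype.ofEquiv W DomMulAct.mk
  -- `W` acts on the left on `α → β` through `Wᵈᵐᵃ`, by `DomMulAct.mk σ • f = f ∘ σ`.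
  have orbit_iff (f j : α → β) : (∃ g : Wᵈᵐᵃ, f = g • j) ↔ ∃ σ ∈ W, f = j ∘ σ :=
    ⟨fun ⟨g, hg⟩ => ⟨_, (DomMulAct.mk.symm g).2, hg⟩, fun ⟨σ, hσ, h⟩ => ⟨DomMulAct.mk ⟨σ, hσ⟩, h⟩⟩
  rw [Nat.card_eq_fintype_card, Fintype.card_congr (DomMulAct.mk (M := W)),
    MulAction.card_nsmul_sum_transversal J (fun f => by simpa only [orbit_iff] using hJ f) w
      fun g f => hw _ (DomMulAct.mk.symm g).2 f]
  exact Fintype.sum_equiv DomMulAct.mk.symm _ _ fun _ => rfl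

/-- **Pólya's enumeration theorem.** Let `W ≤ S_d` act on the
hypercube `[0,n]^d` (functions `Fin d → Fin (n+1)`) by permuting positions,
and let `J` be a transversal of the `W`-orbits.  Then the orbit-counting
generating function `∑_{j∈J} x_{j_1}⋯x_{j_d}` equals the cycle index
`Z(W; p_1,…,p_d) = |W|⁻¹ ∑_{σ∈W} p_1^{c_1(σ)}⋯p_d^{c_d(σ)}` evaluated at the
power sums `p_s = x_0^s + ⋯ + x_n^s`. -/
theorem polya_enumeration
    (d n : ℕ) (W : Subgroup (Equiv.Perm (Fin d))) [Fintype W]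
    (J : Finset (Fin d → Fin (n + 1)))
    (hJ : ∀ f : Fin d → Fin (n + 1),
      ∃! j, j ∈ J ∧ ∃ σ ∈ W, f = j ∘ σ) :
    ∑ j ∈ J, ∏ s : Fin d, (X (j s) : MvPolynomial (Fin (n + 1)) ℚ) =
      (Nat.card W : ℚ)⁻¹ •
        ∑ σ : W, ∏ s ∈ Finset.Icc 1 d,
          (∑ i : Fin (n + 1), (X i : MvPolynomial (Fin (n + 1)) ℚ) ^ s) ^
            cycleCount (σ : Equiv.Perm (Fin d)) s := by
  have hW : (Nat.card W : ℚ) ≠ 0 := Nat.cast_ne_zero.mpr Nat.card_pos.ne'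
  have fixed_sum (σ : W) := Equiv.Perm.sum_prod_comp_eq_self (σ : Equiv.Perm (Fin d))
    fun i : Fin (n + 1) => (X i : MvPolynomial (Fin (n + 1)) ℚ)
  simp only [Fintype.card_fin] at fixed_sum
  rw [eq_inv_smul_iff₀ hW, Nat.cast_smul_eq_nsmul, ← sum_congr rfl fun σ _ => fixed_sum σ]
  exact Subgroup.card_nsmul_sum_transversal_comp W J hJ _
    fun σ _ f => Equiv.prod_comp σ fun s => X (f s)
end

section
/- Let W ≤ S_d be a permutation group acting diagonally on [0,n]^d, let χ be a one-dimensional ℚ-valued character of W with kernel H, and call a W-orbit O a χ-orbit if χ restricted to the stabilizer of any point of O is trivial. Then Σ_O w(O) over all χ-orbits O, where w(O) = x_{j_1}···x_{j_d} for any (j_1,…,j_d) ∈ O, equals the generalized cycle index Z(χ; p_1,…,p_d) = |W|^{-1} Σ_{σ∈W} χ(σ) p_1^{c_1(σ)}···p_d^{c_d(σ)}, with p_s = x_0^s + ··· + x_n^s. (Generalized Pólya theorem.) -/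
open MvPolynomial

/-!
Twisting Burnside's lemma by `χ`: in `∑_{σ ∈ W} χ(σ) · (weight of the σ-fixed colourings)`,
each colouring `f` collects the sum of `χ` over its stabilizer, which is `|Stab f|` when `χ` is
trivial there and `0` otherwise; by orbit–stabilizer each surviving orbit then contributes `|W|`
times its weight. On the other side, a colouring is fixed by `σ` iff it is constant on the cycles
of `σ`, so the fixed colourings have total weight `∏_{cycles c} p_{|c|} = ∏_s p_s ^ c_s(σ)`.
-/

open Finset Equiv Equiv.Perm

theorem Nat.Partition.prod_Icc_pow_count {M : Type*} [CommMonoid M] {n : ℕ} (π : n.Partition)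
    (p : ℕ → M) : ∏ s ∈ Icc 1 n, p s ^ π.parts.count s = (π.parts.map p).prod := by
  rw [prod_multiset_map_count]
  refine (prod_subset (fun s hs => ?_) fun s _ hs => ?_).symm
  · rw [Multiset.mem_toFinset] at hs
    exact mem_Icc.2 ⟨π.parts_pos hs, π.le_of_mem_parts hs⟩
  · rw [Multiset.count_eq_zero_of_notMem (by simpa using hs), pow_zero]

theorem Quotient.sum_prod_comp_mk_eq_prod_sum_pow {β α R : Type*} [Fintype β] [Fintype α]
    [CommSemiring R] (r : Setoid β) [DecidableRel (α := β) (· ≈ ·)] (x : α → R) :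
    ∑ g : Quotient r → α, ∏ b, x (g ⟦b⟧) = ∏ q : Quotient r, ∑ i, x i ^ #{b | ⟦b⟧ = q} := by
  rw [Fintype.prod_sum]
  refine sum_congr rfl fun g _ => ?_
  rw [← prod_fiberwise univ (fun b => ⟦b⟧) (fun b => x (g ⟦b⟧))]
  refine prod_congr rfl fun q _ => ?_
  rw [prod_congr rfl fun b hb => by rw [(mem_filter.1 hb).2], prod_const]

namespace Equiv.Perm

variable {β α : Type*} (σ : Perm β)

theorem mk_sameCycle_eq_mk_iff {b c : β} :
    (⟦b⟧ : Quotient (SameCycle.setoid σ)) = ⟦c⟧ ↔ σ.SameCycle b c :=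
  Quotient.eq

variable [Fintype β]

variable {σ} in
theorem SameCycle.apply_eq_of_comp_eq {f : β → α} (hf : f ∘ σ = f) {b c : β}
    (h : σ.SameCycle b c) : f b = f c := by
  obtain ⟨i, -, rfl⟩ := h.exists_pow_eq'
  rw [coe_pow]
  exact (congrFun (Function.iterate_invariant hf i) b).symm

variable [DecidableEq β]

instance inst_s14 : DecidableRel (SameCycle.setoid σ).r := inferInstanceAs (DecidableRel σ.SameCycle)

theorem sum_filter_comp_eq_self {M : Type*} [AddCommMonoid M] [Fintype α] [DecidableEq α]
    (F : (β → α) → M) :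
    ∑ f ∈ univ.filter (fun f : β → α => f ∘ σ = f), F f =
      ∑ g : Quotient (SameCycle.setoid σ) → α, F (g ∘ (⟦·⟧)) := by
  refine (sum_bij' (fun (g : Quotient (SameCycle.setoid σ) → α) _ => g ∘ (⟦·⟧))
    (fun f hf => Quotient.lift f fun _ _ => SameCycle.apply_eq_of_comp_eq (mem_filter.1 hf).2)
    (fun g _ => mem_filter.2 ⟨mem_univ _, funext fun b => congrArg g ?_⟩)
    (fun _ _ => mem_univ _) (fun g _ => funext fun q => Quotient.inductionOn q fun _ => rfl)
    (fun _ _ => rfl) (fun _ _ => rfl)).symm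
  exact (mk_sameCycle_eq_mk_iff σ).2 (sameCycle_apply_left.2 (SameCycle.refl σ b))

theorem card_filter_mk_eq_of_mem_support {b : β} (hb : b ∈ σ.support) :
    #{c | (⟦c⟧ : Quotient (SameCycle.setoid σ)) = ⟦b⟧} = #(σ.cycleOf b).support := by
  congr 1
  ext c
  rw [mem_filter, mk_sameCycle_eq_mk_iff, mem_support_cycleOf_iff]
  simp [hb, sameCycle_comm]

theorem card_filter_mk_eq_one_of_notMem_support {b : β} (hb : b ∉ σ.support) :
    #{c | (⟦c⟧ : Quotient (SameCycle.setoid σ)) = ⟦b⟧} = 1 := by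
  rw [card_eq_one]
  refine ⟨b, Finset.ext fun c => ?_⟩
  rw [mem_filter, mk_sameCycle_eq_mk_iff, mem_singleton, and_iff_right (mem_univ c)]
  exact ⟨fun h => (h.symm.eq_of_left (notMem_support.1 hb)).symm,
    fun h => h ▸ SameCycle.refl σ c⟩

theorem prod_image_compl_support_card_filter_mk {M : Type*} [CommMonoid M] (p : ℕ → M) :
    ∏ q ∈ σ.supportᶜ.image (⟦·⟧ : β → Quotient (SameCycle.setoid σ)), p #{b | ⟦b⟧ = q} =
      p 1 ^ (Fintype.card β - #σ.support) := by
  rw [prod_image fun b hb c _ hbc =>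
      ((mk_sameCycle_eq_mk_iff σ).1 hbc).eq_of_left (notMem_support.1 (mem_compl.1 hb)),
    prod_congr rfl fun b hb => by
      rw [card_filter_mk_eq_one_of_notMem_support σ (mem_compl.1 hb)],
    prod_const, card_compl]

theorem prod_image_support_card_filter_mk {M : Type*} [CommMonoid M] (p : ℕ → M) :
    ∏ q ∈ σ.support.image (⟦·⟧ : β → Quotient (SameCycle.setoid σ)), p #{b | ⟦b⟧ = q} =
      (σ.cycleType.map p).prod := by
  rw [cycleType_def, Multiset.map_map, prod_map_val]
  refine prod_nbij (Quotient.lift σ.cycleOf fun _ _ h => h.cycleOf_eq) ?_ ?_ ?_ ?_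
  · simp only [mem_image]
    rintro _ ⟨b, hb, rfl⟩
    exact cycleOf_mem_cycleFactorsFinset_iff.2 hb
  · simp only [Set.InjOn, coe_image, Set.mem_image, mem_coe]
    rintro _ ⟨b, hb, rfl⟩ _ ⟨c, hc, rfl⟩ hbc
    have hcb : c ∈ (σ.cycleOf b).support := by
      rw [show σ.cycleOf b = σ.cycleOf c from hbc, mem_support_cycleOf_iff]
      exact ⟨SameCycle.refl σ c, hc⟩
    exact (mk_sameCycle_eq_mk_iff σ).2 (mem_support_cycleOf_iff.1 hcb).1
  · intro c hc
    obtain ⟨b, hb⟩ := (mem_cycleFactorsFinset_iff.1 hc).1.nonempty_support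
    exact ⟨⟦b⟧, mem_image_of_mem _ (mem_cycleFactorsFinset_support_le hc hb),
      (cycle_is_cycleOf hb hc).symm⟩
  · simp only [mem_image]
    rintro _ ⟨b, hb, rfl⟩
    rw [card_filter_mk_eq_of_mem_support σ hb]
    rfl

theorem prod_card_sameCycle_classes {M : Type*} [CommMonoid M] (p : ℕ → M) :
    ∏ q : Quotient (SameCycle.setoid σ), p #{b | ⟦b⟧ = q} = (σ.partition.parts.map p).prod := by
  set mk : β → Quotient (SameCycle.setoid σ) := (⟦·⟧)
  have hsplit : (univ : Finset _) = σ.support.image mk ∪ σ.supportᶜ.image mk := by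
    rw [← image_union, union_compl, image_univ_of_surjective Quotient.mk_surjective]
  have hdisj : _root_.Disjoint (σ.support.image mk) (σ.supportᶜ.image mk) := by
    simp only [disjoint_left, mem_image, mem_compl, not_exists, not_and]
    rintro _ ⟨b, hb, rfl⟩ c hc hcb
    exact hc (((mk_sameCycle_eq_mk_iff σ).1 hcb).mem_support_iff.2 hb)
  rw [hsplit, prod_union hdisj, prod_image_support_card_filter_mk,
    prod_image_compl_support_card_filter_mk, parts_partition, Multiset.map_add,
    Multiset.prod_add, Multiset.map_replicate, Multiset.prod_replicate]

end Equiv.Perm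

theorem cycleCount_eq_count_partition {β : Type*} [Fintype β] [DecidableEq β] (σ : Perm β)
    (s : ℕ) : cycleCount σ s = σ.partition.parts.count s := by
  rw [parts_partition, Multiset.count_add, Multiset.count_replicate, cycleCount]
  split_ifs with h₁ h₂ h₂
  · subst h₁
    rw [Multiset.count_eq_zero_of_notMem fun h => (one_lt_of_mem_cycleType h).false, zero_add]
  · exact absurd h₁.symm h₂
  · exact absurd h₂.symm h₁
  · rw [add_zero]

theorem prod_pow_cycleCount_eq_sum_fixed {β α R : Type*} [Fintype β] [DecidableEq β]
    [Fintype α] [DecidableEq α] [CommSemiring R] (σ : Perm β) (x : α → R) :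
    ∏ s ∈ Icc 1 (Fintype.card β), (∑ i, x i ^ s) ^ cycleCount σ s =
      ∑ f ∈ univ.filter (fun f : β → α => f ∘ σ = f), ∏ b, x (f b) := by
  simp_rw [cycleCount_eq_count_partition]
  rw [σ.partition.prod_Icc_pow_count, ← prod_card_sameCycle_classes, sum_filter_comp_eq_self,
    ← Quotient.sum_prod_comp_mk_eq_prod_sum_pow]
  rfl

section TwistedBurnside
open MulAction
variable {G X R M : Type*} [Group G] [MulAction G X]

theorem stabilizer_smul_le_ker {A : Type*} [CommGroup A] {χ : G →* A} {x : X}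
    (hx : stabilizer G x ≤ χ.ker) (g : G) : stabilizer G (g • x) ≤ χ.ker := by
  rw [stabilizer_smul_eq_stabilizer_map_conj]
  rintro _ ⟨k, hk, rfl⟩
  simp [MonoidHom.mem_ker.1 (hx hk)]

variable [Fintype G] [DecidableEq X] [AddCommMonoid M]

theorem sum_orbit_card_stabilizer_smul {w : X → M} (hw : ∀ (g : G) x, w (g • x) = w x)
    (x : X) :
    ∑ y ∈ (univ : Finset G).image (· • x), Nat.card (stabilizer G y) • w y =
      Nat.card G • w x := by
  have hconst : ∀ y ∈ (univ : Finset G).image (· • x),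
      Nat.card (stabilizer G y) • w y = Nat.card (stabilizer G x) • w x := by
    intro y hy
    obtain ⟨g, -, rfl⟩ := mem_image.1 hy
    rw [hw, Nat.card_congr (stabilizerEquivStabilizer rfl).toEquiv.symm]
  rw [sum_congr rfl hconst, sum_const, smul_smul, ← (stabilizer G x).index_mul_card,
    index_stabilizer, ← Set.ncard_coe_finset, coe_image, coe_univ, Set.image_univ]
  rfl

variable [CommRing R]

theorem sum_units_val_of_le_ker {χ : G →* Rˣ} {H : Subgroup G} [DecidablePred (· ∈ H)]
    (hH : H ≤ χ.ker) : ∑ g ∈ univ.filter (· ∈ H), (χ g : R) = Nat.card H := by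
  rw [sum_congr rfl fun g hg => by rw [hH (mem_filter.1 hg).2, Units.val_one],
    sum_const, nsmul_one, Nat.card_eq_fintype_card, Fintype.card_subtype]

theorem sum_units_val_of_not_le_ker [IsDomain R] {χ : G →* Rˣ} {H : Subgroup G}
    [DecidablePred (· ∈ H)] (hH : ¬ H ≤ χ.ker) : ∑ g ∈ univ.filter (· ∈ H), (χ g : R) = 0 := by
  have hne : (Units.coeHom R).comp (χ.comp H.subtype) ≠ 1 := fun h =>
    hH fun g hg => Units.ext (DFunLike.congr_fun h (⟨g, hg⟩ : H))
  rw [sum_subtype (p := (· ∈ H)) _ (fun g => by simp), ← sum_hom_units_eq_zero _ hne]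
  rfl

variable [Fintype X] [Module R M]

theorem sum_smul_sum_fixed_eq_sum_sum_stabilizer_smul (χ : G →* Rˣ) (w : X → M) :
    ∑ g : G, (χ g : R) • ∑ x ∈ univ.filter (fun x => g • x = x), w x =
      ∑ x, (∑ g ∈ univ.filter (· ∈ stabilizer G x), (χ g : R)) • w x := by
  simp_rw [smul_sum, sum_smul, sum_filter]
  rw [sum_comm]
  rfl

theorem sum_smul_sum_fixed_eq_card_smul_sum [IsDomain R] (χ : G →* Rˣ) {w : X → M}
    (hw : ∀ (g : G) x, w (g • x) = w x) (J : Finset X)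
    (hJ₁ : ∀ j ∈ J, stabilizer G j ≤ χ.ker)
    (hJ₂ : ∀ x, stabilizer G x ≤ χ.ker → ∃! j, j ∈ J ∧ x ∈ orbit G j) :
    ∑ g : G, (χ g : R) • ∑ x ∈ univ.filter (fun x => g • x = x), w x =
      Nat.card G • ∑ j ∈ J, w j := by
  have mem_image_smul : ∀ {x j : X}, x ∈ (univ : Finset G).image (· • j) ↔ x ∈ orbit G j := by
    simp [mem_orbit_iff]
  set S := J.biUnion fun j => (univ : Finset G).image (· • j)
  have hS : ∀ x, x ∈ S ↔ stabilizer G x ≤ χ.ker := by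
    intro x
    simp only [S, mem_biUnion, mem_image_smul]
    refine ⟨?_, fun hx => (hJ₂ x hx).exists⟩
    rintro ⟨j, hj, g, rfl⟩
    exact stabilizer_smul_le_ker (hJ₁ j hj) g
  have hdisj : (J : Set X).PairwiseDisjoint fun j => (univ : Finset G).image (· • j) := by
    intro j hj j' hj' hne
    refine disjoint_left.2 fun x hx hx' => hne ?_
    have hgood := (hS x).1 (mem_biUnion.2 ⟨j, hj, hx⟩)
    exact (hJ₂ x hgood).unique ⟨hj, mem_image_smul.1 hx⟩ ⟨hj', mem_image_smul.1 hx'⟩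
  rw [sum_smul_sum_fixed_eq_sum_sum_stabilizer_smul, ← sum_subset (subset_univ S)
      fun x _ hx => by rw [sum_units_val_of_not_le_ker ((hS x).not.1 hx), zero_smul],
    sum_biUnion hdisj, smul_sum]
  refine sum_congr rfl fun j hj => ?_
  rw [← sum_orbit_card_stabilizer_smul hw j]
  refine sum_congr rfl fun x hx => ?_
  rw [sum_units_val_of_le_ker ((hS x).1 (mem_biUnion.2 ⟨j, hj, hx⟩)), Nat.cast_smul_eq_nsmul]

end TwistedBurnside

section ArrowAction
open MulAction
attribute [local instance] arrowAction
variable {β α : Type*} {W : Subgroup (Perm β)}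

theorem Subgroup.smul_eq_self_iff_comp_eq {g : W} {f : β → α} : g • f = f ↔ f ∘ g = f :=
  (Equiv.comp_symm_eq _ _ _).trans eq_comm

theorem Subgroup.mem_orbit_iff_exists_comp {f j : β → α} :
    f ∈ orbit W j ↔ ∃ σ ∈ W, f = j ∘ σ := by
  constructor
  · rintro ⟨g, rfl⟩
    exact ⟨(g⁻¹ : W), (g⁻¹ : W).2, rfl⟩
  · rintro ⟨σ, hσ, rfl⟩
    exact ⟨(⟨σ, hσ⟩ : W)⁻¹, funext fun b => congrArg j (congrFun (congrArg _ (inv_inv _)) b)⟩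

end ArrowAction

/-- **generalized Pólya theorem.** Let `W ≤ S_d` act on
`[0,n]^d` by permuting positions and let `χ : W → ℚˣ` be a one-dimensional
character.  A `W`-orbit is a `χ`-orbit when `χ` is trivial on the stabilizer
of its points.  If `J` is a transversal of the `χ`-orbits, then the weighted
sum `∑_O w(O) = ∑_{j∈J} x_{j_1}⋯x_{j_d}` equals the generalized cycle index
`Z(χ; p_1,…,p_d) = |W|⁻¹ ∑_{σ∈W} χ(σ) p_1^{c_1(σ)}⋯p_d^{c_d(σ)}` at the power
sums `p_s = x_0^s + ⋯ + x_n^s`. -/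
theorem generalized_polya_enumeration
    (d n : ℕ) (W : Subgroup (Equiv.Perm (Fin d))) [Fintype W]
    (χ : W →* ℚˣ)
    (J : Finset (Fin d → Fin (n + 1)))
    (hJ1 : ∀ j ∈ J, ∀ σ : W, j ∘ (σ : Equiv.Perm (Fin d)) = j → χ σ = 1)
    (hJ2 : ∀ f : Fin d → Fin (n + 1),
      (∀ σ : W, f ∘ (σ : Equiv.Perm (Fin d)) = f → χ σ = 1) →
        ∃! j, j ∈ J ∧ ∃ σ ∈ W, f = j ∘ σ) :
    ∑ j ∈ J, ∏ s : Fin d, (X (j s) : MvPolynomial (Fin (n + 1)) ℚ) =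
      (Nat.card W : ℚ)⁻¹ •
        ∑ σ : W, (χ σ : ℚ) •
          ∏ s ∈ Finset.Icc 1 d,
            (∑ i : Fin (n + 1), (X i : MvPolynomial (Fin (n + 1)) ℚ) ^ s) ^
              cycleCount (σ : Equiv.Perm (Fin d)) s := by
  let _ : MulAction W (Fin d → Fin (n + 1)) := arrowAction
  have hcycle (σ : W) : ∏ s ∈ Icc 1 d, (∑ i, (X i : MvPolynomial (Fin (n + 1)) ℚ) ^ s) ^
      cycleCount (σ : Perm (Fin d)) s =
        ∑ f ∈ univ.filter (fun f : Fin d → Fin (n + 1) => σ • f = f), ∏ s, X (f s) := by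
    simpa only [Fintype.card_fin, Subgroup.smul_eq_self_iff_comp_eq] using
      prod_pow_cycleCount_eq_sum_fixed (σ : Perm (Fin d)) (X (R := ℚ) (σ := Fin (n + 1)))
  have hburnside := sum_smul_sum_fixed_eq_card_smul_sum (R := ℚ) χ
    (w := fun f : Fin d → Fin (n + 1) => ∏ s, (X (f s) : MvPolynomial (Fin (n + 1)) ℚ))
    (fun g f => Equiv.prod_comp (g⁻¹ : W).1 fun s => X (f s)) J
    (fun j hj g hg => hJ1 j hj g (Subgroup.smul_eq_self_iff_comp_eq.1 hg))
    (fun f hf => by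
      simpa only [Subgroup.mem_orbit_iff_exists_comp] using
        hJ2 f fun g hg => hf (Subgroup.smul_eq_self_iff_comp_eq.2 hg))
  simp only [hcycle]
  rw [hburnside, ← Nat.cast_smul_eq_nsmul ℚ, smul_smul,
    inv_mul_cancel₀ (Nat.cast_ne_zero.2 Nat.card_pos.ne'), one_smul]
end
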